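/- Under the standing hypotheses (including the additional ones for the degree-two maps), set m₂^{V⊙W,0_V−} := m₂^{V,0−}∘(𝚫₁^W⊗𝚫₁^W) + m₁^{V,0−}∘Δ₂^W∘(𝐛₁^V⊗𝐛₁^V) : X⊗X → Q (the Q-valued component of m₂^{V⊙W}) and m₁^{V⊙W,0_V−} := m₁^{V,0−}∘𝚫₁^W : X → Q. Then m₂^{V⊙W,0_V−}∘(m₁^{V⊙W}⊗id_X) + m₂^{V⊙W,0_V−}∘(id_X⊗m₁^{V⊙W}) + m₁^{V⊙W,0_V−}∘m₂^{V⊙W} = 0 as maps X⊗X → Q. Together with the companion identity for the P-valued components, this says that m₂^{V⊙W} satisfies the Leibniz rule with respect to m₁^{V⊙W}. (Equation (35) of the paper, Section 6.2.) -/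
import Mathlib
open TensorProduct

namespace LegoutStmt6

private lemma addSelf {M : Type*} [AddCommGroup M] [Module (ZMod 2) M] (x : M) : x + x = 0 := by
  have h : (2 : ZMod 2) • x = 0 := by
    have : (2 : ZMod 2) = 0 := rfl
    rw [this, zero_smul]
  simpa [two_smul] using h

private lemma solve2 {M : Type*} [AddCommGroup M] [Module (ZMod 2) M] {x y : M}
    (h : x + y = 0) : x = y := by
  have h2 := addSelf y
  have h3 : x + y + y = 0 + y := by rw [h]
  rw [add_assoc, h2, add_zero, zero_add] at h3
  exact h3

private lemma solve3 {M : Type*} [AddCommGroup M] [Module (ZMod 2) M] {x y z : M}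
    (h : x + y + z = 0) : x = y + z := by
  apply solve2
  have : x + (y + z) = x + y + z := by abel
  rw [this, h]

private lemma rT_comm {R : Type*} [CommRing R] {A B A' B' : Type*}
    [AddCommGroup A] [Module R A] [AddCommGroup B] [Module R B]
    [AddCommGroup A'] [Module R A'] [AddCommGroup B'] [Module R B']
    (f : A →ₗ[R] B) (g : A' →ₗ[R] B') (h : A →ₗ[R] A) (h' : B →ₗ[R] B)
    (hc : f ∘ₗ h = h' ∘ₗ f) :
    (TensorProduct.map f g) ∘ₗ LinearMap.rTensor A' h
      = LinearMap.rTensor B' h' ∘ₗ TensorProduct.map f g := by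
  apply TensorProduct.ext'
  intro x y
  simp [LinearMap.congr_fun hc x]

private lemma lT_comm {R : Type*} [CommRing R] {A B A' B' : Type*}
    [AddCommGroup A] [Module R A] [AddCommGroup B] [Module R B]
    [AddCommGroup A'] [Module R A'] [AddCommGroup B'] [Module R B']
    (f : A →ₗ[R] B) (g : A' →ₗ[R] B') (h : A' →ₗ[R] A') (h' : B' →ₗ[R] B')
    (hc : g ∘ₗ h = h' ∘ₗ g) :
    (TensorProduct.map f g) ∘ₗ LinearMap.lTensor A h
      = LinearMap.lTensor B h' ∘ₗ TensorProduct.map f g := by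
  apply TensorProduct.ext'
  intro x y
  simp [LinearMap.congr_fun hc y]

private lemma prodsplit {R : Type*} [CommRing R] {W A B : Type*}
    [AddCommGroup W] [Module R W] [AddCommGroup A] [Module R A] [AddCommGroup B] [Module R B]
    (f : W →ₗ[R] A) (g : W →ₗ[R] B) :
    LinearMap.prod f g = LinearMap.inl R A B ∘ₗ f + LinearMap.inr R A B ∘ₗ g := by
  ext w <;> simp

variable {P Q C C' : Type*}
  [AddCommGroup P] [Module (ZMod 2) P]
  [AddCommGroup Q] [Module (ZMod 2) Q]
  [AddCommGroup C] [Module (ZMod 2) C]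
  [AddCommGroup C'] [Module (ZMod 2) C']

/-- `𝚫₁^W : X = P ⊕ Q → Z = C′ ⊕ Q`, `p + q ↦ Δ₁^W(p) + q`. -/
def boldDelta1W (Δ1W : P →ₗ[ZMod 2] C') : (P × Q) →ₗ[ZMod 2] C' × Q :=
  LinearMap.prod (Δ1W ∘ₗ LinearMap.fst (ZMod 2) P Q) (LinearMap.snd (ZMod 2) P Q)

/-- `𝐛₁^V : X → Y = P ⊕ C`, `p + q ↦ p + b₁^V(Δ₁^W(p)) + b₁^V(q)`. -/
def boldB1V (Δ1W : P →ₗ[ZMod 2] C') (b1V : (C' × Q) →ₗ[ZMod 2] C) :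
    (P × Q) →ₗ[ZMod 2] P × C :=
  LinearMap.prod (LinearMap.fst (ZMod 2) P Q) (b1V ∘ₗ boldDelta1W Δ1W)

/-- `𝚫₁^{W⊂W} : Y → 𝔠 = C′ ⊕ C`, `p + c ↦ Δ₁^W(p) + c`. -/
def delta1WW (Δ1W : P →ₗ[ZMod 2] C') : (P × C) →ₗ[ZMod 2] C' × C :=
  LinearMap.prod (Δ1W ∘ₗ LinearMap.fst (ZMod 2) P C) (LinearMap.snd (ZMod 2) P C)

/-- `𝐛₁^{V⊂V} : Z → 𝔠`, `c′ + q ↦ c′ + b₁^V(c′) + b₁^V(q)`. -/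
def b1VV (b1V : (C' × Q) →ₗ[ZMod 2] C) : (C' × Q) →ₗ[ZMod 2] C' × C :=
  LinearMap.prod (LinearMap.fst (ZMod 2) C' Q) b1V

/-- `m₁^{V⊙W} := m₁^{W,+0}∘𝐛₁^V + m₁^{V,0−}∘𝚫₁^W : X → X`. -/
def m1VoW (mW0 : (P × C) →ₗ[ZMod 2] P) (mV0 : (C' × Q) →ₗ[ZMod 2] Q)
    (Δ1W : P →ₗ[ZMod 2] C') (b1V : (C' × Q) →ₗ[ZMod 2] C) :
    (P × Q) →ₗ[ZMod 2] P × Q :=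
  LinearMap.prod (mW0 ∘ₗ boldB1V Δ1W b1V) (mV0 ∘ₗ boldDelta1W Δ1W)

/-- The `P`-valued component `m₂^{V⊙W,+0_W}` of `m₂^{V⊙W}`:
`m₂^{W,+0}∘(𝐛₁^V⊗𝐛₁^V) + m₁^{W,+0}∘b₁^V∘Δ₂^W∘(𝐛₁^V⊗𝐛₁^V) + m₁^{W,+0}∘b₂^V∘(𝚫₁^W⊗𝚫₁^W)`. -/
noncomputable def m2PComp (mW0 : (P × C) →ₗ[ZMod 2] P)
    (Δ1W : P →ₗ[ZMod 2] C') (b1V : (C' × Q) →ₗ[ZMod 2] C)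
    (m2W0 : ((P × C) ⊗[ZMod 2] (P × C)) →ₗ[ZMod 2] P)
    (Δ2W : ((P × C) ⊗[ZMod 2] (P × C)) →ₗ[ZMod 2] C')
    (b2V : ((C' × Q) ⊗[ZMod 2] (C' × Q)) →ₗ[ZMod 2] C) :
    ((P × Q) ⊗[ZMod 2] (P × Q)) →ₗ[ZMod 2] P :=
  m2W0 ∘ₗ TensorProduct.map (boldB1V Δ1W b1V) (boldB1V Δ1W b1V)
    + mW0 ∘ₗ LinearMap.inr (ZMod 2) P C ∘ₗ b1V ∘ₗ LinearMap.inl (ZMod 2) C' Q ∘ₗ Δ2W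
        ∘ₗ TensorProduct.map (boldB1V Δ1W b1V) (boldB1V Δ1W b1V)
    + mW0 ∘ₗ LinearMap.inr (ZMod 2) P C ∘ₗ b2V
        ∘ₗ TensorProduct.map (boldDelta1W Δ1W) (boldDelta1W Δ1W)

/-- The `Q`-valued component `m₂^{V⊙W,0_V−}` of `m₂^{V⊙W}`:
`m₂^{V,0−}∘(𝚫₁^W⊗𝚫₁^W) + m₁^{V,0−}∘Δ₂^W∘(𝐛₁^V⊗𝐛₁^V)`. -/
noncomputable def m2QComp (mV0 : (C' × Q) →ₗ[ZMod 2] Q)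
    (Δ1W : P →ₗ[ZMod 2] C') (b1V : (C' × Q) →ₗ[ZMod 2] C)
    (m2V0 : ((C' × Q) ⊗[ZMod 2] (C' × Q)) →ₗ[ZMod 2] Q)
    (Δ2W : ((P × C) ⊗[ZMod 2] (P × C)) →ₗ[ZMod 2] C') :
    ((P × Q) ⊗[ZMod 2] (P × Q)) →ₗ[ZMod 2] Q :=
  m2V0 ∘ₗ TensorProduct.map (boldDelta1W Δ1W) (boldDelta1W Δ1W)
    + mV0 ∘ₗ LinearMap.inl (ZMod 2) C' Q ∘ₗ Δ2W
        ∘ₗ TensorProduct.map (boldB1V Δ1W b1V) (boldB1V Δ1W b1V)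

/-- `m₂^{V⊙W} : X ⊗ X → X`. -/
noncomputable def m2VoW (mW0 : (P × C) →ₗ[ZMod 2] P) (mV0 : (C' × Q) →ₗ[ZMod 2] Q)
    (Δ1W : P →ₗ[ZMod 2] C') (b1V : (C' × Q) →ₗ[ZMod 2] C)
    (m2W0 : ((P × C) ⊗[ZMod 2] (P × C)) →ₗ[ZMod 2] P)
    (m2V0 : ((C' × Q) ⊗[ZMod 2] (C' × Q)) →ₗ[ZMod 2] Q)
    (Δ2W : ((P × C) ⊗[ZMod 2] (P × C)) →ₗ[ZMod 2] C')
    (b2V : ((C' × Q) ⊗[ZMod 2] (C' × Q)) →ₗ[ZMod 2] C) :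
    ((P × Q) ⊗[ZMod 2] (P × Q)) →ₗ[ZMod 2] P × Q :=
  LinearMap.prod (m2PComp mW0 Δ1W b1V m2W0 Δ2W b2V) (m2QComp mV0 Δ1W b1V m2V0 Δ2W)

/-- Equation (35) of Legout, Section 6.2: the `Q`-valued (i.e. `0_V−`) component of the
Leibniz rule for `m₂^{V⊙W}` with respect to `m₁^{V⊙W}`. -/
theorem leibniz_Q_component
    (mW0 : (P × C) →ₗ[ZMod 2] P) (mWm : (P × C) →ₗ[ZMod 2] C)
    (mVp : (C' × Q) →ₗ[ZMod 2] C') (mV0 : (C' × Q) →ₗ[ZMod 2] Q)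
    (Δ1W : P →ₗ[ZMod 2] C') (b1V : (C' × Q) →ₗ[ZMod 2] C)
    (Δ1L : C' →ₗ[ZMod 2] C') (b1L : (C' × C) →ₗ[ZMod 2] C)
    (m2W0 : ((P × C) ⊗[ZMod 2] (P × C)) →ₗ[ZMod 2] P)
    (m2Wm : ((P × C) ⊗[ZMod 2] (P × C)) →ₗ[ZMod 2] C)
    (m2Vp : ((C' × Q) ⊗[ZMod 2] (C' × Q)) →ₗ[ZMod 2] C')
    (m2V0 : ((C' × Q) ⊗[ZMod 2] (C' × Q)) →ₗ[ZMod 2] Q)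
    (Δ2W : ((P × C) ⊗[ZMod 2] (P × C)) →ₗ[ZMod 2] C')
    (b2V : ((C' × Q) ⊗[ZMod 2] (C' × Q)) →ₗ[ZMod 2] C)
    (Δ2L : ((C' × C) ⊗[ZMod 2] (C' × C)) →ₗ[ZMod 2] C')
    (b2L : ((C' × C) ⊗[ZMod 2] (C' × C)) →ₗ[ZMod 2] C)
    -- (D1) m₁^W ∘ m₁^W = 0
    (hD1 : (LinearMap.prod mW0 mWm) ∘ₗ (LinearMap.prod mW0 mWm) = 0)
    -- (D2) m₁^V ∘ m₁^V = 0
    (hD2 : (LinearMap.prod mVp mV0) ∘ₗ (LinearMap.prod mVp mV0) = 0)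
    -- (S1) m₁^{W,−} = b₁^Λ ∘ 𝚫₁^{W⊂W}
    (hS1 : mWm = b1L ∘ₗ delta1WW Δ1W)
    -- (S2) m₁^{V,+} = Δ₁^Λ ∘ π_{C′}
    (hS2 : mVp = Δ1L ∘ₗ LinearMap.fst (ZMod 2) C' Q)
    -- (R1) Δ₁^W ∘ m₁^{W,+0} = Δ₁^Λ ∘ Δ₁^W ∘ π_P
    (hR1 : Δ1W ∘ₗ mW0 = (Δ1L ∘ₗ Δ1W) ∘ₗ LinearMap.fst (ZMod 2) P C)
    -- (R2) b₁^V ∘ m₁^V = b₁^Λ ∘ 𝐛₁^{V⊂V}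
    (hR2 : b1V ∘ₗ (LinearMap.prod mVp mV0) = b1L ∘ₗ b1VV b1V)
    -- (L1)
    (hL1 : m2W0 ∘ₗ LinearMap.rTensor (P × C) (LinearMap.prod mW0 mWm)
      + m2W0 ∘ₗ LinearMap.lTensor (P × C) (LinearMap.prod mW0 mWm)
      + mW0 ∘ₗ LinearMap.prod m2W0 m2Wm = 0)
    -- (L2)
    (hL2 : m2V0 ∘ₗ LinearMap.rTensor (C' × Q) (LinearMap.prod mVp mV0)
      + m2V0 ∘ₗ LinearMap.lTensor (C' × Q) (LinearMap.prod mVp mV0)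
      + mV0 ∘ₗ LinearMap.prod m2Vp m2V0 = 0)
    -- (L3)
    (hL3 : Δ2W ∘ₗ LinearMap.rTensor (P × C) (LinearMap.prod mW0 mWm)
      + Δ2W ∘ₗ LinearMap.lTensor (P × C) (LinearMap.prod mW0 mWm)
      + Δ1W ∘ₗ m2W0
      + Δ2L ∘ₗ TensorProduct.map (delta1WW Δ1W) (delta1WW Δ1W)
      + Δ1L ∘ₗ Δ2W = 0)
    -- (L4)
    (hL4 : b2V ∘ₗ LinearMap.rTensor (C' × Q) (LinearMap.prod mVp mV0)
      + b2V ∘ₗ LinearMap.lTensor (C' × Q) (LinearMap.prod mVp mV0)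
      + b1V ∘ₗ LinearMap.prod m2Vp m2V0
      + b2L ∘ₗ TensorProduct.map (b1VV b1V) (b1VV b1V)
      + b1L ∘ₗ LinearMap.inr (ZMod 2) C' C ∘ₗ b2V = 0)
    -- (S1′)
    (hS1' : m2Wm = b1L ∘ₗ LinearMap.inl (ZMod 2) C' C ∘ₗ Δ2W
      + b2L ∘ₗ TensorProduct.map (delta1WW Δ1W) (delta1WW Δ1W))
    -- (S2′)
    (hS2' : m2Vp = Δ2L ∘ₗ TensorProduct.map (b1VV b1V) (b1VV b1V)) :
    (m2QComp mV0 Δ1W b1V m2V0 Δ2W)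
        ∘ₗ LinearMap.rTensor (P × Q) (m1VoW mW0 mV0 Δ1W b1V)
      + (m2QComp mV0 Δ1W b1V m2V0 Δ2W)
        ∘ₗ LinearMap.lTensor (P × Q) (m1VoW mW0 mV0 Δ1W b1V)
      + (mV0 ∘ₗ boldDelta1W Δ1W) ∘ₗ (m2VoW mW0 mV0 Δ1W b1V m2W0 m2V0 Δ2W b2V) = 0 := by
  -- pointwise versions of hypotheses
  have r1 : ∀ y : P × C, Δ1W (mW0 y) = Δ1L (Δ1W y.1) := fun y => by
    simpa using LinearMap.congr_fun hR1 y
  have s2 : ∀ z : C' × Q, mVp z = Δ1L z.1 := fun z => by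
    simpa using LinearMap.congr_fun hS2 z
  have r2 : ∀ z : C' × Q, b1V (mVp z, mV0 z) = b1L (b1VV b1V z) := fun z => by
    simpa using LinearMap.congr_fun hR2 z
  have s1 : ∀ y : P × C, mWm y = b1L (delta1WW Δ1W y) := fun y => by
    simpa using LinearMap.congr_fun hS1 y
  -- (A)
  have hA : boldDelta1W Δ1W ∘ₗ m1VoW mW0 mV0 Δ1W b1V
      = LinearMap.prod mVp mV0 ∘ₗ boldDelta1W Δ1W := by
    ext x <;> simp [m1VoW, boldDelta1W, boldB1V, r1, s2]
  have hApt : ∀ x : P × Q, boldDelta1W Δ1W (m1VoW mW0 mV0 Δ1W b1V x)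
      = LinearMap.prod mVp mV0 (boldDelta1W Δ1W x) := fun x => LinearMap.congr_fun hA x
  have r2' : ∀ z : C' × Q, b1V ((LinearMap.prod mVp mV0) z) = b1L (b1VV b1V z) :=
    fun z => LinearMap.congr_fun hR2 z
  -- (C)
  have hC : b1VV b1V ∘ₗ boldDelta1W Δ1W = delta1WW Δ1W ∘ₗ boldB1V Δ1W b1V := by
    ext x <;> simp [b1VV, boldDelta1W, delta1WW, boldB1V]
  have hCpt : ∀ x : P × Q, b1VV b1V (boldDelta1W Δ1W x) = delta1WW Δ1W (boldB1V Δ1W b1V x) :=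
    fun x => LinearMap.congr_fun hC x
  -- (B)
  have hB : boldB1V Δ1W b1V ∘ₗ m1VoW mW0 mV0 Δ1W b1V
      = LinearMap.prod mW0 mWm ∘ₗ boldB1V Δ1W b1V := by
    apply LinearMap.ext; intro x
    apply Prod.ext
    · simp [m1VoW, boldB1V, boldDelta1W]
    · show (boldB1V Δ1W b1V (m1VoW mW0 mV0 Δ1W b1V x)).2
        = (LinearMap.prod mW0 mWm (boldB1V Δ1W b1V x)).2
      have e1 : (boldB1V Δ1W b1V (m1VoW mW0 mV0 Δ1W b1V x)).2
          = b1V (boldDelta1W Δ1W (m1VoW mW0 mV0 Δ1W b1V x)) := rfl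
      rw [e1, hApt x, r2' _, hCpt x]
      exact (s1 (boldB1V Δ1W b1V x)).symm
  -- (C)
  -- tensor commutations
  have hA2 : TensorProduct.map (boldDelta1W Δ1W) (boldDelta1W Δ1W)
        ∘ₗ LinearMap.rTensor (P × Q) (m1VoW mW0 mV0 Δ1W b1V)
      = LinearMap.rTensor (C' × Q) (LinearMap.prod mVp mV0)
        ∘ₗ TensorProduct.map (boldDelta1W Δ1W) (boldDelta1W Δ1W) := rT_comm _ _ _ _ hA
  have hA3 : TensorProduct.map (boldDelta1W Δ1W) (boldDelta1W Δ1W)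
        ∘ₗ LinearMap.lTensor (P × Q) (m1VoW mW0 mV0 Δ1W b1V)
      = LinearMap.lTensor (C' × Q) (LinearMap.prod mVp mV0)
        ∘ₗ TensorProduct.map (boldDelta1W Δ1W) (boldDelta1W Δ1W) := lT_comm _ _ _ _ hA
  have hB2 : TensorProduct.map (boldB1V Δ1W b1V) (boldB1V Δ1W b1V)
        ∘ₗ LinearMap.rTensor (P × Q) (m1VoW mW0 mV0 Δ1W b1V)
      = LinearMap.rTensor (P × C) (LinearMap.prod mW0 mWm)
        ∘ₗ TensorProduct.map (boldB1V Δ1W b1V) (boldB1V Δ1W b1V) := rT_comm _ _ _ _ hB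
  have hB3 : TensorProduct.map (boldB1V Δ1W b1V) (boldB1V Δ1W b1V)
        ∘ₗ LinearMap.lTensor (P × Q) (m1VoW mW0 mV0 Δ1W b1V)
      = LinearMap.lTensor (P × C) (LinearMap.prod mW0 mWm)
        ∘ₗ TensorProduct.map (boldB1V Δ1W b1V) (boldB1V Δ1W b1V) := lT_comm _ _ _ _ hB
  have hC2 : TensorProduct.map (b1VV b1V) (b1VV b1V)
        ∘ₗ TensorProduct.map (boldDelta1W Δ1W) (boldDelta1W Δ1W)
      = TensorProduct.map (delta1WW Δ1W) (delta1WW Δ1W)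
        ∘ₗ TensorProduct.map (boldB1V Δ1W b1V) (boldB1V Δ1W b1V) := by
    rw [← TensorProduct.map_comp, ← TensorProduct.map_comp, hC]
  -- E: Δ1W ∘ mW0 ∘ inr = 0
  have hE1 : ∀ (X : (P × Q) ⊗[ZMod 2] (P × Q) →ₗ[ZMod 2] C),
      Δ1W ∘ₗ (mW0 ∘ₗ (LinearMap.inr (ZMod 2) P C ∘ₗ X)) = 0 := by
    intro X
    apply LinearMap.ext; intro t
    have := r1 ((0 : P), X t)
    simpa using this
  -- F pointwise
  have hF : ∀ z : C' × Q, mV0 (mVp z, mV0 z) = 0 := by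
    intro z
    have := LinearMap.congr_fun hD2 z
    have h2 : (LinearMap.prod mVp mV0) ((LinearMap.prod mVp mV0) z) = 0 := this
    have := congrArg Prod.snd h2
    simpa using this
  -- G
  have hG1 : ∀ (X : (P × Q) ⊗[ZMod 2] (P × Q) →ₗ[ZMod 2] C'),
      mV0 ∘ₗ (LinearMap.inl (ZMod 2) C' Q ∘ₗ (Δ1L ∘ₗ X))
        = mV0 ∘ₗ (LinearMap.inr (ZMod 2) C' Q ∘ₗ (mV0 ∘ₗ (LinearMap.inl (ZMod 2) C' Q ∘ₗ X))) := by
    intro X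
    apply LinearMap.ext; intro t
    apply solve2
    have key : mV0 (Δ1L (X t), mV0 (X t, 0)) = 0 := by
      have := hF ((X t, 0))
      rwa [s2 (X t, 0)] at this
    calc mV0 ((LinearMap.inl (ZMod 2) C' Q) (Δ1L (X t)))
          + mV0 ((LinearMap.inr (ZMod 2) C' Q) (mV0 ((LinearMap.inl (ZMod 2) C' Q) (X t))))
        = mV0 ((Δ1L (X t), 0) + (0, mV0 (X t, 0))) := by
          rw [map_add]; rfl
      _ = mV0 (Δ1L (X t), mV0 (X t, 0)) := by
          congr 1
          simp
      _ = 0 := key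
  -- D ∘ inl / inr
  have hDinl : boldDelta1W Δ1W ∘ₗ LinearMap.inl (ZMod 2) P Q
      = LinearMap.inl (ZMod 2) C' Q ∘ₗ Δ1W := by
    ext x <;> simp [boldDelta1W]
  have hDinr : boldDelta1W Δ1W ∘ₗ LinearMap.inr (ZMod 2) P Q
      = LinearMap.inr (ZMod 2) C' Q := by
    ext x <;> simp [boldDelta1W]
  -- composed variants of hDinl/hDinr
  have hDinl1 : ∀ (X : (P × Q) ⊗[ZMod 2] (P × Q) →ₗ[ZMod 2] P),
      boldDelta1W Δ1W ∘ₗ (LinearMap.inl (ZMod 2) P Q ∘ₗ X)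
        = LinearMap.inl (ZMod 2) C' Q ∘ₗ (Δ1W ∘ₗ X) := by
    intro X; apply LinearMap.ext; intro t
    simpa using LinearMap.congr_fun hDinl (X t)
  have hDinr1 : ∀ (X : (P × Q) ⊗[ZMod 2] (P × Q) →ₗ[ZMod 2] Q),
      boldDelta1W Δ1W ∘ₗ (LinearMap.inr (ZMod 2) P Q ∘ₗ X)
        = LinearMap.inr (ZMod 2) C' Q ∘ₗ X := by
    intro X; apply LinearMap.ext; intro t
    simpa using LinearMap.congr_fun hDinr (X t)
  -- L2 derived
  have hL2s : m2V0 ∘ₗ LinearMap.rTensor (C' × Q) (LinearMap.prod mVp mV0)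
      = m2V0 ∘ₗ LinearMap.lTensor (C' × Q) (LinearMap.prod mVp mV0)
        + mV0 ∘ₗ LinearMap.prod m2Vp m2V0 := solve3 hL2
  have hL2c : m2V0 ∘ₗ (LinearMap.rTensor (C' × Q) (LinearMap.prod mVp mV0)
        ∘ₗ TensorProduct.map (boldDelta1W Δ1W) (boldDelta1W Δ1W))
      = m2V0 ∘ₗ (LinearMap.lTensor (C' × Q) (LinearMap.prod mVp mV0)
          ∘ₗ TensorProduct.map (boldDelta1W Δ1W) (boldDelta1W Δ1W))
        + mV0 ∘ₗ (LinearMap.inl (ZMod 2) C' Q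
            ∘ₗ (m2Vp ∘ₗ TensorProduct.map (boldDelta1W Δ1W) (boldDelta1W Δ1W)))
        + mV0 ∘ₗ (LinearMap.inr (ZMod 2) C' Q
            ∘ₗ (m2V0 ∘ₗ TensorProduct.map (boldDelta1W Δ1W) (boldDelta1W Δ1W))) := by
    have h2 := congrArg
      (fun f => f ∘ₗ TensorProduct.map (boldDelta1W Δ1W) (boldDelta1W Δ1W)) hL2s
    simp only [LinearMap.add_comp, LinearMap.comp_assoc] at h2
    rw [prodsplit m2Vp m2V0] at h2
    simp only [LinearMap.add_comp, LinearMap.comp_add, LinearMap.comp_assoc] at h2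
    rw [h2]; abel
  -- L3 derived
  have hL3s : Δ2W ∘ₗ LinearMap.rTensor (P × C) (LinearMap.prod mW0 mWm)
      = Δ2W ∘ₗ LinearMap.lTensor (P × C) (LinearMap.prod mW0 mWm)
        + Δ1W ∘ₗ m2W0
        + Δ2L ∘ₗ TensorProduct.map (delta1WW Δ1W) (delta1WW Δ1W)
        + Δ1L ∘ₗ Δ2W := by
    apply solve2
    rw [← hL3]; abel
  have hL3c : Δ2W ∘ₗ (LinearMap.rTensor (P × C) (LinearMap.prod mW0 mWm)
        ∘ₗ TensorProduct.map (boldB1V Δ1W b1V) (boldB1V Δ1W b1V))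
      = Δ2W ∘ₗ (LinearMap.lTensor (P × C) (LinearMap.prod mW0 mWm)
          ∘ₗ TensorProduct.map (boldB1V Δ1W b1V) (boldB1V Δ1W b1V))
        + Δ1W ∘ₗ (m2W0 ∘ₗ TensorProduct.map (boldB1V Δ1W b1V) (boldB1V Δ1W b1V))
        + Δ2L ∘ₗ (TensorProduct.map (delta1WW Δ1W) (delta1WW Δ1W)
            ∘ₗ TensorProduct.map (boldB1V Δ1W b1V) (boldB1V Δ1W b1V))
        + Δ1L ∘ₗ (Δ2W ∘ₗ TensorProduct.map (boldB1V Δ1W b1V) (boldB1V Δ1W b1V)) := by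
    have h2 := congrArg
      (fun f => f ∘ₗ TensorProduct.map (boldB1V Δ1W b1V) (boldB1V Δ1W b1V)) hL3s
    simp only [LinearMap.add_comp, LinearMap.comp_assoc] at h2
    rw [h2]
  -- main computation
  simp only [m2QComp, m2VoW, m2PComp, LinearMap.add_comp, LinearMap.comp_add, LinearMap.comp_assoc]
  rw [prodsplit]
  simp only [LinearMap.comp_add, LinearMap.add_comp, LinearMap.comp_assoc]
  simp only [hDinl1, hDinr1, LinearMap.comp_add, LinearMap.add_comp, LinearMap.comp_assoc]
  rw [hA2, hA3, hB2, hB3]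
  rw [hL2c, hL3c]
  simp only [LinearMap.comp_add, LinearMap.add_comp, LinearMap.comp_assoc]
  rw [hS2']
  simp only [LinearMap.comp_add, LinearMap.add_comp, LinearMap.comp_assoc]
  rw [hC2]
  simp only [hE1, hG1, LinearMap.comp_zero, LinearMap.zero_comp, add_zero, zero_add,
    LinearMap.comp_add, LinearMap.comp_assoc]
  have h2z : ∀ (f : (P × Q) ⊗[ZMod 2] (P × Q) →ₗ[ZMod 2] Q), (2 : ℤ) • f = 0 := fun f => by
    rw [two_zsmul]; exact addSelf f
  abel_nf
  simp [h2z]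

end LegoutStmt6
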